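/- Fix θ ∈ (0,1), let d_θ be the standard metric on Ω = {1,...,d}^ℕ, and let log J : Ω → ℝ be Lipschitz with respect to d_θ and normalized, i.e. ∑_{a=1}^d J(a⌢x) = 1 for all x ∈ Ω. Let ℒ* denote the dual of the Ruelle operator acting on Borel probability measures, so that (ℒ*)^k(δ_x) = ∑_{w ∈ {1,...,d}^k} J^k(w⌢x) δ_{w⌢x}, where J^k(z) = ∏_{i=0}^{k-1} J(σ^i z). Then for every δ > 0 there exist T ∈ ℕ and a > 0 such that for every k ≥ T and all x, y ∈ Ω there exists a coupling Γ of (ℒ*)^k(δ_x) and (ℒ*)^k(δ_y) with Γ{(x',y') ∈ Ω × Ω : d_θ(x',y') ≤ δ} ≥ a. -/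

import Mathlib

open MeasureTheory Finset

/-- The metric `d_θ` on `Ω = {1,…,d}^ℕ`: `d_θ(x,y) = θ^N` where `N` is the first index
at which `x` and `y` disagree, and `d_θ(x,y) = 0` if `x = y`. -/
noncomputable def dTheta {d : ℕ} (θ : ℝ) (x y : ℕ → Fin d) : ℝ :=
  letI := Classical.dec (x = y)
  if h : x = y then 0 else θ ^ Nat.find (Function.ne_iff.mp h)

/-- Prepending a symbol: `a⌢x`. -/
def cons {d : ℕ} (a : Fin d) (x : ℕ → Fin d) : ℕ → Fin d :=
  fun n => match n with
  | 0 => a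
  | m + 1 => x m

/-- The dual `ℒ*` of the Ruelle operator of the potential `log J`, acting on Borel
measures on `Ω = {1,…,d}^ℕ`: it satisfies `∫ ψ d(ℒ*ν) = ∫ ℒψ dν` where
`(ℒψ)(x) = ∑_a J(a⌢x) ψ(a⌢x)`; on a Dirac mass, `ℒ*(δ_x) = ∑_a J(a⌢x) δ_{a⌢x}`. -/
noncomputable def dualRuelle {d : ℕ} (J : (ℕ → Fin d) → ℝ)
    (ν : Measure (ℕ → Fin d)) : Measure (ℕ → Fin d) :=
  ν.bind (fun x => ∑ a : Fin d, ENNReal.ofReal (J (cons a x)) • Measure.dirac (cons a x))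

/-! The product coupling already works. A `d_θ`-Lipschitz `log J` is continuous and bounded,
so `J ≥ m` for some `m > 0`, and every cylinder of length `N ≤ k` has `(ℒ*)^k δ_x`-mass at least
`m^N`: its first symbol is reached from the shorter cylinder with weight `J ≥ m`. Under
`μ ⊗ ν` the pairs agreeing on their first `N` symbols then have mass
`∫ ν[x']_N dμ(x') ≥ m^N`, and they are `θ^N`-close. -/

open PiNat (cylinder mem_cylinder_iff)
open scoped ENNReal

lemma MeasureTheory.Measure.le_prod_apply_of_le_measure_slice {α β : Type*}
    [MeasurableSpace α] [MeasurableSpace β] {μ : Measure α} {ν : Measure β}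
    [IsProbabilityMeasure μ] [SFinite ν] {s : Set (α × β)} (hs : MeasurableSet s) {c : ℝ≥0∞}
    (h : ∀ x, c ≤ ν (Prod.mk x ⁻¹' s)) : c ≤ μ.prod ν s := by
  rw [Measure.prod_apply hs]
  calc c = ∫⁻ _, c ∂μ := by simp
    _ ≤ _ := lintegral_mono h

section Shift

variable {d : ℕ}

lemma measurable_cons (a : Fin d) : Measurable (cons a) := by
  refine measurable_pi_lambda _ fun n => ?_
  cases n with
  | zero => exact measurable_const
  | succ m => exact measurable_pi_apply m

lemma measurableSet_cylinder (u : ℕ → Fin d) (n : ℕ) : MeasurableSet (cylinder u n) := by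
  rw [PiNat.cylinder_eq_pi]
  exact MeasurableSet.pi (Finset.range n).countable_toSet fun i _ => measurableSet_singleton _

lemma measurableSet_snd_mem_cylinder_fst (n : ℕ) :
    MeasurableSet {p : (ℕ → Fin d) × (ℕ → Fin d) | p.2 ∈ cylinder p.1 n} := by
  simp only [mem_cylinder_iff, Set.ofPred_forall]
  exact MeasurableSet.iInter fun i => MeasurableSet.iInter fun _ =>
    measurableSet_eq_fun ((measurable_pi_apply i).comp measurable_snd)
      ((measurable_pi_apply i).comp measurable_fst)

lemma preimage_cons_cylinder_succ (u : ℕ → Fin d) (n : ℕ) :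
    cons (u 0) ⁻¹' cylinder u (n + 1) = cylinder (fun i => u (i + 1)) n := by
  ext z
  simp only [Set.mem_preimage, mem_cylinder_iff, Nat.forall_lt_succ_left]
  exact ⟨And.right, And.intro rfl⟩

section Metric

variable {θ : ℝ}

lemma dTheta_nonneg (hθ0 : 0 ≤ θ) (x y : ℕ → Fin d) : 0 ≤ dTheta θ x y := by
  unfold dTheta
  split_ifs <;> positivity

lemma dTheta_le_pow_of_mem_cylinder (hθ0 : 0 ≤ θ) (hθ1 : θ ≤ 1) {x y : ℕ → Fin d} {n : ℕ}
    (h : y ∈ cylinder x n) : dTheta θ x y ≤ θ ^ n := by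
  unfold dTheta
  split_ifs with hxy
  · positivity
  · refine pow_le_pow_of_le_one hθ0 hθ1 ((Nat.le_find_iff _ _).mpr fun i hi => ?_)
    simpa using (mem_cylinder_iff.mp h i hi).symm

lemma mul_dTheta_le_of_mem_cylinder (hθ0 : 0 ≤ θ) (hθ1 : θ ≤ 1) (M : ℝ) {x y : ℕ → Fin d}
    {n : ℕ} (h : y ∈ cylinder x n) : M * dTheta θ x y ≤ |M| * θ ^ n :=
  calc M * dTheta θ x y ≤ |M| * dTheta θ x y :=
        mul_le_mul_of_nonneg_right (le_abs_self M) (dTheta_nonneg hθ0 x y)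
    _ ≤ |M| * θ ^ n :=
        mul_le_mul_of_nonneg_left (dTheta_le_pow_of_mem_cylinder hθ0 hθ1 h) (abs_nonneg M)

lemma continuous_of_abs_sub_le_mul_dTheta (hθ0 : 0 ≤ θ) (hθ1 : θ < 1) {M : ℝ}
    {f : (ℕ → Fin d) → ℝ} (hf : ∀ u v, |f u - f v| ≤ M * dTheta θ u v) : Continuous f := by
  refine continuous_iff_continuousAt.mpr fun x => Metric.tendsto_nhds.mpr fun ε hε => ?_
  obtain ⟨n, hn⟩ : ∃ n : ℕ, |M| * θ ^ n < ε :=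
    (((tendsto_pow_atTop_nhds_zero_of_lt_one hθ0 hθ1).const_mul |M|).eventually
      (gt_mem_nhds (by simpa using hε))).exists
  filter_upwards [(PiNat.isOpen_cylinder _ x n).mem_nhds (PiNat.self_mem_cylinder x n)] with y hy
  rw [Real.dist_eq, abs_sub_comm]
  exact ((hf x y).trans (mul_dTheta_le_of_mem_cylinder hθ0 hθ1.le M hy)).trans_lt hn

variable {M : ℝ} {J : (ℕ → Fin d) → ℝ}

lemma continuous_of_abs_log_sub_le (hθ0 : 0 ≤ θ) (hθ1 : θ < 1) (hJpos : ∀ x, 0 < J x)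
    (hJlip : ∀ u v, |Real.log (J u) - Real.log (J v)| ≤ M * dTheta θ u v) : Continuous J := by
  have := Real.continuous_exp.comp (continuous_of_abs_sub_le_mul_dTheta hθ0 hθ1 hJlip)
  simpa [Function.comp_def, Real.exp_log, hJpos] using this

lemma exists_pos_le_of_abs_log_sub_le (hθ0 : 0 ≤ θ) (hθ1 : θ ≤ 1) (hJpos : ∀ x, 0 < J x)
    (hJlip : ∀ u v, |Real.log (J u) - Real.log (J v)| ≤ M * dTheta θ u v) :
    ∃ m > 0, ∀ x, m ≤ J x := by
  rcases isEmpty_or_nonempty (ℕ → Fin d) with _ | ⟨⟨x₀⟩⟩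
  · exact ⟨1, one_pos, isEmptyElim⟩
  refine ⟨J x₀ * Real.exp (-|M|), by have := hJpos x₀; positivity, fun x => ?_⟩
  have hlog : |Real.log (J x₀) - Real.log (J x)| ≤ |M| := by
    simpa only [pow_zero, mul_one] using (hJlip x₀ x).trans
      (mul_dTheta_le_of_mem_cylinder hθ0 hθ1 M (n := 0) (by simp))
  calc J x₀ * Real.exp (-|M|) = Real.exp (Real.log (J x₀) - |M|) := by
        rw [sub_eq_add_neg, Real.exp_add, Real.exp_log (hJpos x₀)]
    _ ≤ Real.exp (Real.log (J x)) := Real.exp_le_exp.mpr (by linarith [(abs_le.mp hlog).2])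
    _ = J x := Real.exp_log (hJpos x)

end Metric

section DualRuelle

variable {J : (ℕ → Fin d) → ℝ}

lemma measurable_dualRuelle_kernel (hJ : Measurable J) :
    Measurable fun x : ℕ → Fin d =>
      ∑ a : Fin d, ENNReal.ofReal (J (cons a x)) • Measure.dirac (cons a x) := by
  refine Measure.measurable_of_measurable_coe _ fun s hs => ?_
  simp only [Measure.finsetSum_apply, Measure.smul_apply, smul_eq_mul,
    Measure.dirac_apply' _ hs]
  exact Finset.measurable_sum _ fun a _ =>
    (ENNReal.measurable_ofReal.comp (hJ.comp (measurable_cons a))).mul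
      ((measurable_one.indicator hs).comp (measurable_cons a))

lemma dualRuelle_apply (hJ : Measurable J) (ν : Measure (ℕ → Fin d)) {s : Set (ℕ → Fin d)}
    (hs : MeasurableSet s) :
    dualRuelle J ν s
      = ∫⁻ x, ∑ a : Fin d, ENNReal.ofReal (J (cons a x)) * s.indicator 1 (cons a x) ∂ν := by
  rw [dualRuelle, Measure.bind_apply hs (measurable_dualRuelle_kernel hJ).aemeasurable]
  simp only [Measure.finsetSum_apply, Measure.smul_apply, smul_eq_mul,
    Measure.dirac_apply' _ hs]

lemma dualRuelle_apply_univ (hJ : Measurable J) (hJ0 : ∀ x, 0 ≤ J x)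
    (hJnorm : ∀ x, ∑ a : Fin d, J (cons a x) = 1) (ν : Measure (ℕ → Fin d)) :
    dualRuelle J ν Set.univ = ν Set.univ := by
  have hmass (x : ℕ → Fin d) :
      ∑ a : Fin d, ENNReal.ofReal (J (cons a x)) = 1 := by
    rw [← ENNReal.ofReal_sum_of_nonneg fun a _ => hJ0 _, hJnorm x, ENNReal.ofReal_one]
  simp [dualRuelle_apply hJ ν MeasurableSet.univ, hmass]

lemma isProbabilityMeasure_iterate_dualRuelle (hJ : Measurable J) (hJ0 : ∀ x, 0 ≤ J x)
    (hJnorm : ∀ x, ∑ a : Fin d, J (cons a x) = 1) (ν : Measure (ℕ → Fin d))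
    [IsProbabilityMeasure ν] (k : ℕ) : IsProbabilityMeasure ((dualRuelle J)^[k] ν) := by
  induction k with
  | zero => assumption
  | succ k ih =>
    rw [Function.iterate_succ_apply']
    exact ⟨by rw [dualRuelle_apply_univ hJ hJ0 hJnorm, measure_univ]⟩

lemma ofReal_mul_apply_preimage_cons_le_dualRuelle (hJ : Measurable J) {m : ℝ}
    (hm : ∀ x, m ≤ J x) (ν : Measure (ℕ → Fin d)) (a : Fin d) {s : Set (ℕ → Fin d)}
    (hs : MeasurableSet s) : ENNReal.ofReal m * ν (cons a ⁻¹' s) ≤ dualRuelle J ν s := by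
  rw [dualRuelle_apply hJ ν hs, ← lintegral_indicator_one (measurable_cons a hs),
    ← lintegral_const_mul _ (measurable_one.indicator (measurable_cons a hs))]
  refine lintegral_mono fun x => ?_
  calc ENNReal.ofReal m * (cons a ⁻¹' s).indicator 1 x
      ≤ ENNReal.ofReal (J (cons a x)) * s.indicator 1 (cons a x) := by
        rw [← Set.indicator_comp_right]
        exact mul_le_mul' (ENNReal.ofReal_le_ofReal (hm _)) le_rfl
    _ ≤ _ := Finset.single_le_sum (f := fun b : Fin d =>
          ENNReal.ofReal (J (cons b x)) * s.indicator 1 (cons b x))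
          (fun _ _ => bot_le) (Finset.mem_univ a)

lemma ofReal_pow_le_iterate_dualRuelle_cylinder (hJ : Measurable J) (hJ0 : ∀ x, 0 ≤ J x)
    (hJnorm : ∀ x, ∑ a : Fin d, J (cons a x) = 1) {m : ℝ} (hm : ∀ x, m ≤ J x)
    (ν : Measure (ℕ → Fin d)) [IsProbabilityMeasure ν] {n k : ℕ} (hnk : n ≤ k)
    (u : ℕ → Fin d) : ENNReal.ofReal m ^ n ≤ (dualRuelle J)^[k] ν (cylinder u n) := by
  induction n generalizing k u with
  | zero =>
    have := isProbabilityMeasure_iterate_dualRuelle hJ hJ0 hJnorm ν k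
    simp [PiNat.cylinder_zero]
  | succ n ih =>
    obtain ⟨j, rfl⟩ : ∃ j, k = j + 1 := ⟨k - 1, by omega⟩
    rw [Function.iterate_succ_apply']
    calc ENNReal.ofReal m ^ (n + 1)
        = ENNReal.ofReal m * ENNReal.ofReal m ^ n := pow_succ' _ _
      _ ≤ ENNReal.ofReal m * (dualRuelle J)^[j] ν (cons (u 0) ⁻¹' cylinder u (n + 1)) := by
        rw [preimage_cons_cylinder_succ]
        gcongr
        exact ih (by omega) _
      _ ≤ _ := ofReal_mul_apply_preimage_cons_le_dualRuelle hJ hm _ _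
          (measurableSet_cylinder u (n + 1))

end DualRuelle

end Shift

/-- for a normalized `d_θ`-Lipschitz potential `log J`, for every `δ > 0`
there are `T ∈ ℕ` and `a > 0` such that for every `k ≥ T` and all `x, y` there exists a
coupling `Γ` of `(ℒ*)^k(δ_x)` and `(ℒ*)^k(δ_y)` with
`Γ{(x',y') : d_θ(x',y') ≤ δ} ≥ a`. -/
theorem exists_coupling_mass_near_diagonal
    (d : ℕ) (θ : ℝ) (hθ0 : 0 < θ) (hθ1 : θ < 1)
    (J : (ℕ → Fin d) → ℝ) (hJpos : ∀ x, 0 < J x)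
    (M : ℝ) (hJlip : ∀ u v, |Real.log (J u) - Real.log (J v)| ≤ M * dTheta θ u v)
    (hJnorm : ∀ x, ∑ a : Fin d, J (cons a x) = 1) :
    ∀ δ : ℝ, 0 < δ →
      ∃ (T : ℕ) (a : ℝ), 0 < a ∧
        ∀ k : ℕ, T ≤ k → ∀ x y : ℕ → Fin d,
          ∃ Γ : Measure ((ℕ → Fin d) × (ℕ → Fin d)),
            Γ.map Prod.fst = (dualRuelle J)^[k] (Measure.dirac x) ∧
            Γ.map Prod.snd = (dualRuelle J)^[k] (Measure.dirac y) ∧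
            a ≤ (Γ {p | dTheta θ p.1 p.2 ≤ δ}).toReal := by
  intro δ hδ
  obtain ⟨m, hm0, hm⟩ := exists_pos_le_of_abs_log_sub_le hθ0.le hθ1.le hJpos hJlip
  have hJ : Measurable J := (continuous_of_abs_log_sub_le hθ0.le hθ1 hJpos hJlip).measurable
  have hJ0 (z : ℕ → Fin d) : 0 ≤ J z := (hJpos z).le
  obtain ⟨N, hN⟩ := exists_pow_lt_of_lt_one hδ hθ1
  refine ⟨N, m ^ N, pow_pos hm0 N, fun k hk x y => ?_⟩
  have := isProbabilityMeasure_iterate_dualRuelle hJ hJ0 hJnorm (Measure.dirac x) k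
  have := isProbabilityMeasure_iterate_dualRuelle hJ hJ0 hJnorm (Measure.dirac y) k
  refine ⟨((dualRuelle J)^[k] (Measure.dirac x)).prod ((dualRuelle J)^[k] (Measure.dirac y)),
    by simp, by simp, ?_⟩
  have hnear : {p : (ℕ → Fin d) × (ℕ → Fin d) | p.2 ∈ cylinder p.1 N}
      ⊆ {p | dTheta θ p.1 p.2 ≤ δ} := fun p hp =>
    (dTheta_le_pow_of_mem_cylinder hθ0.le hθ1.le hp).trans hN.le
  rw [← ENNReal.ofReal_le_iff_le_toReal (measure_ne_top _ _), ENNReal.ofReal_pow hm0.le]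
  refine le_trans ?_ (measure_mono hnear)
  exact Measure.le_prod_apply_of_le_measure_slice (measurableSet_snd_mem_cylinder_fst N)
    fun x' => ofReal_pow_le_iterate_dualRuelle_cylinder hJ hJ0 hJnorm hm _ hk x'
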